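/- arXiv:0803.0339 — 5 statements merged into one kernel-verified Lean document; each statement's English description precedes it below -/
import Mathlib

section
/- Let R be a bounded self-adjoint operator on a complex Hilbert space H whose kernel is trivial (Ru = 0 implies u = 0). Then for every u ∈ H, the vectors λ·(λ·Id + i·R)⁻¹ u converge in norm to 0 as λ → 0+. -/
/-!
For self-adjoint `R` and real `λ`, `‖(λ + iR)x‖² = λ²‖x‖² + ‖Rx‖²`, so `λ + iR` is invertible for
`λ ≠ 0` and `E^λ = λ(λ + iR)⁻¹` is a contraction. On the range of `R` the family is `O(λ)`, because
`E^λ R = -iλ(1 - E^λ)`. That range is dense, its orthogonal complement being `ker R = 0`, and a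
uniformly bounded family of operators converging on a dense set converges everywhere.
-/

open Filter Topology

namespace IsSelfAdjoint

variable {H : Type*} [NormedAddCommGroup H] [InnerProductSpace ℂ H] [CompleteSpace H]
  {R : H →L[ℂ] H}

theorem norm_sq_smul_add_I_smul_apply (hR : IsSelfAdjoint R) (l : ℝ) (x : H) :
    ‖(l : ℂ) • x + Complex.I • R x‖ ^ 2 = (|l| * ‖x‖) ^ 2 + ‖R x‖ ^ 2 := by
  have hcross : RCLike.re (inner ℂ ((l : ℂ) • x) (Complex.I • R x)) = 0 := by
    simp only [inner_smul_left, inner_smul_right]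
    simpa using Or.inr (hR.isSymmetric.im_inner_self_apply x)
  rw [norm_add_sq (𝕜 := ℂ), hcross, norm_smul, norm_smul]
  simp [mul_pow]

theorem abs_mul_norm_le_norm_smul_add_I_smul_apply (hR : IsSelfAdjoint R) (l : ℝ) (x : H) :
    |l| * ‖x‖ ≤ ‖(l : ℂ) • x + Complex.I • R x‖ := by
  refine le_of_sq_le_sq ?_ (norm_nonneg _)
  rw [hR.norm_sq_smul_add_I_smul_apply]
  exact le_add_of_nonneg_right (sq_nonneg _)

theorem isUnit_smul_one_add_I_smul (hR : IsSelfAdjoint R) {l : ℝ} (hl : l ≠ 0) :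
    IsUnit ((l : ℂ) • (1 : H →L[ℂ] H) + Complex.I • R) := by
  have hspec : Complex.I * l ∉ spectrum ℂ R := fun h => by
    simpa [hl] using congrArg Complex.im (hR.mem_spectrum_eq_re h)
  have hfactor : (l : ℂ) • (1 : H →L[ℂ] H) + Complex.I • R
      = algebraMap ℂ _ (-Complex.I) * (algebraMap ℂ _ (Complex.I * l) - R) := by
    ext x
    simp [Algebra.algebraMap_eq_smul_one, smul_sub, smul_smul, ← mul_assoc]
    abel
  rw [hfactor]
  exact ((isUnit_iff_ne_zero.mpr (by simp)).map _).mul (spectrum.notMem_iff.mp hspec)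

theorem denseRange_of_injective (hR : IsSelfAdjoint R) (hinj : Function.Injective R) :
    DenseRange R := by
  have horth : (LinearMap.range (R : H →ₗ[ℂ] H))ᗮ = ⊥ := by
    rw [hR.isSymmetric.orthogonal_range, LinearMap.ker_eq_bot]
    exact hinj
  rwa [← Submodule.topologicalClosure_eq_top_iff,
    ← Submodule.dense_iff_topologicalClosure_eq_top, LinearMap.coe_range] at horth

end IsSelfAdjoint

namespace ContinuousLinearMap

variable {H : Type*} [NormedAddCommGroup H] [InnerProductSpace ℂ H] [CompleteSpace H]
  {R : H →L[ℂ] H}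

/-- At `l = 0`, where `Ring.inverse` may return its junk value `0`, this is `0` either way. -/
noncomputable def regularizedResolvent (R : H →L[ℂ] H) (l : ℝ) : H →L[ℂ] H :=
  (l : ℂ) • Ring.inverse ((l : ℂ) • 1 + Complex.I • R)

theorem norm_regularizedResolvent_le_one (hR : IsSelfAdjoint R) (l : ℝ) :
    ‖regularizedResolvent R l‖ ≤ 1 := by
  rcases eq_or_ne l 0 with rfl | hl
  · simp [regularizedResolvent]
  refine opNorm_le_bound _ zero_le_one fun x => ?_
  set A := (l : ℂ) • (1 : H →L[ℂ] H) + Complex.I • R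
  set y := Ring.inverse A x
  have hy : (l : ℂ) • y + Complex.I • R y = x := by
    simpa [A, y] using congr($(Ring.mul_inverse_cancel A (hR.isUnit_smul_one_add_I_smul hl)) x)
  calc ‖regularizedResolvent R l x‖ = ‖(l : ℂ) • y‖ := rfl
    _ = |l| * ‖y‖ := by rw [norm_smul, Complex.norm_real, Real.norm_eq_abs]
    _ ≤ ‖x‖ := hy ▸ hR.abs_mul_norm_le_norm_smul_add_I_smul_apply l y
    _ = 1 * ‖x‖ := (one_mul _).symm

theorem regularizedResolvent_mul_self (hR : IsSelfAdjoint R) (l : ℝ) :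
    regularizedResolvent R l * R = (-(l : ℂ) * Complex.I) • (1 - regularizedResolvent R l) := by
  rcases eq_or_ne l 0 with rfl | hl
  · simp [regularizedResolvent]
  set A := (l : ℂ) • (1 : H →L[ℂ] H) + Complex.I • R
  have hA : Ring.inverse A * A = 1 :=
    Ring.inverse_mul_cancel A (hR.isUnit_smul_one_add_I_smul hl)
  have hsum : (l : ℂ) • Ring.inverse A + Complex.I • (Ring.inverse A * R) = 1 := by
    simpa [A, mul_add, mul_smul_comm] using hA
  have hinvR : Ring.inverse A * R = -Complex.I • (1 - (l : ℂ) • Ring.inverse A) := by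
    rw [← hsum]
    simp [smul_smul]
  rw [regularizedResolvent, smul_mul_assoc, hinvR, smul_smul, mul_neg, neg_mul, mul_comm]

theorem tendsto_regularizedResolvent_apply_self (hR : IsSelfAdjoint R) (v : H) :
    Tendsto (fun l : ℝ => regularizedResolvent R l (R v)) (𝓝 0) (𝓝 0) := by
  have hfactor (l : ℝ) : regularizedResolvent R l (R v)
      = (-(l : ℂ) * Complex.I) • (v - regularizedResolvent R l v) := by
    simpa using congr($(regularizedResolvent_mul_self hR l) v)
  simp_rw [hfactor]
  refine Tendsto.zero_smul_isBoundedUnder_le ?_ (isBoundedUnder_of ⟨2 * ‖v‖, fun l => ?_⟩)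
  · simpa using (Complex.continuous_ofReal.tendsto 0).neg.mul_const Complex.I
  · calc ‖v - regularizedResolvent R l v‖
        ≤ ‖v‖ + ‖regularizedResolvent R l v‖ := norm_sub_le _ _
      _ ≤ ‖v‖ + 1 * ‖v‖ := by
        grw [le_of_opNorm_le _ (norm_regularizedResolvent_le_one hR l) v]
      _ = 2 * ‖v‖ := by ring

theorem tendsto_regularizedResolvent_apply (hR : IsSelfAdjoint R) (hinj : Function.Injective R)
    (u : H) : Tendsto (fun l : ℝ => regularizedResolvent R l u) (𝓝 0) (𝓝 0) := by
  have hequi : Equicontinuous fun l : ℝ => ⇑(regularizedResolvent R l) :=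
    (LipschitzWith.uniformEquicontinuous _ 1 fun l =>
      (regularizedResolvent R l).lipschitz.weaken
        (by exact_mod_cast norm_regularizedResolvent_le_one hR l)).equicontinuous
  have hclosed : IsClosed {x | Tendsto (fun l : ℝ => regularizedResolvent R l x) (𝓝 0) (𝓝 0)} :=
    hequi.isClosed_setOfPred_tendsto continuous_const
  have hrange : Set.range R ⊆ {x | Tendsto (regularizedResolvent R · x) (𝓝 0) (𝓝 0)} := by
    rintro _ ⟨v, rfl⟩
    exact tendsto_regularizedResolvent_apply_self hR v
  exact hclosed.closure_subset_iff.2 hrange (hR.denseRange_of_injective hinj u)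

end ContinuousLinearMap

/-- If `R` is a bounded self-adjoint operator with trivial kernel on a complex Hilbert space,
then for every `u`, `λ·(λ·Id + i·R)⁻¹ u → 0` in norm as `λ → 0+`. -/
theorem regularized_resolvent_tendsto_zero
    {H : Type*} [NormedAddCommGroup H] [InnerProductSpace ℂ H] [CompleteSpace H]
    (R : H →L[ℂ] H) (hR : IsSelfAdjoint R)
    (hker : ∀ u : H, R u = 0 → u = 0) (u : H) :
    Tendsto (fun l : ℝ =>
        (l : ℂ) • (Ring.inverse ((l : ℂ) • (1 : H →L[ℂ] H) + Complex.I • R)) u)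
      (nhdsWithin 0 (Set.Ioi 0)) (nhds (0 : H)) :=
  (ContinuousLinearMap.tendsto_regularizedResolvent_apply hR
    ((injective_iff_map_eq_zero R).2 hker) u).mono_left nhdsWithin_le_nhds
end

section
/- Let α ∈ L²(ℝ; ℂ) and let F : ℝ → ℂ be smooth with compact support. Define K(x,y) = α(x−y)·(F(x)−F(y))/(x−y) for x ≠ y and K(x,x) = α(0)·F′(x). Then K belongs to L²(ℝ × ℝ) and ‖K‖_{L²(ℝ×ℝ)} ≤ ‖α‖_{L²(ℝ)}·‖F′‖_{L²(ℝ)}. -/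
open MeasureTheory
open scoped ENNReal

/-- The commutator kernel `K(x,y) = α(x−y)·(F(x)−F(y))/(x−y)`, with the diagonal value
`K(x,x) = α(0)·F′(x)`. -/
noncomputable def commKernel (α F : ℝ → ℂ) (p : ℝ × ℝ) : ℂ :=
  if p.1 = p.2 then α 0 * deriv F p.1
  else α (p.1 - p.2) * (F p.1 - F p.2) / ((p.1 : ℂ) - (p.2 : ℂ))

open Set intervalIntegral in
/-- If `α ∈ L²(ℝ; ℂ)` and `F` is smooth with compact support, then the commutator kernel `K`
belongs to `L²(ℝ×ℝ)` with `‖K‖_{L²(ℝ×ℝ)} ≤ ‖α‖_{L²}·‖F′‖_{L²}`. -/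
theorem commKernel_memL2
    (α F : ℝ → ℂ) (hα : MemLp α 2 (volume : Measure ℝ))
    (hF : ContDiff ℝ (⊤ : ℕ∞) F) (hFc : HasCompactSupport F) :
    MemLp (commKernel α F) 2 (volume : Measure (ℝ × ℝ)) ∧
      eLpNorm (commKernel α F) 2 (volume : Measure (ℝ × ℝ))
        ≤ eLpNorm α 2 (volume : Measure ℝ) * eLpNorm (deriv F) 2 (volume : Measure ℝ) := by
  classical
  have hd : Continuous (deriv F) := hF.continuous_deriv (by simp)
  set I : ℝ × ℝ → ℂ := fun p => ∫ ρ in (0:ℝ)..1, deriv F (ρ * p.1 + p.2) with hI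
  -- continuity of the parametrized integral
  have hIcont : Continuous I := by
    obtain ⟨M, hM⟩ := hd.bounded_above_of_compact_support hFc.deriv
    have hrw : ∀ p : ℝ × ℝ, I p = ∫ ρ in Ioc (0:ℝ) 1, deriv F (ρ * p.1 + p.2) := by
      intro p; rw [hI]; exact intervalIntegral.integral_of_le zero_le_one
    rw [show I = (fun p : ℝ × ℝ => ∫ ρ in Ioc (0:ℝ) 1, deriv F (ρ * p.1 + p.2)) from funext hrw]
    apply continuous_of_dominated
    · intro p
      exact (hd.comp ((continuous_id.mul continuous_const).add continuous_const)).aestronglyMeasurable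
    · intro p
      exact Filter.Eventually.of_forall fun ρ => hM _
    · exact integrableOn_const measure_Ioc_lt_top.ne
    · exact Filter.Eventually.of_forall fun ρ => hd.comp ((continuous_const.mul continuous_fst).add continuous_snd)
  set G : ℝ × ℝ → ℂ := fun q => α q.1 * I q with hG
  -- the kernel equals G composed with the measure preserving shear
  have hid : ∀ x y : ℝ, commKernel α F (x, y) = G (x - y, y) := by
    intro x y
    rcases eq_or_ne x y with h | h
    · subst h; simp [commKernel, hG, hI]
    · have hu : x - y ≠ 0 := sub_ne_zero.2 h
      have h1 : I (x - y, y) = (x - y)⁻¹ • ∫ t in y..x, deriv F t := by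
        rw [hI]
        simp only
        simp_rw [show ∀ ρ:ℝ, ρ * (x-y) + y = (x-y)*ρ + y from fun ρ => by ring]
        rw [intervalIntegral.integral_comp_mul_add (deriv F) hu y]
        norm_num
      have h2 : (∫ t in y..x, deriv F t) = F x - F y :=
        intervalIntegral.integral_deriv_eq_sub
          (fun t _ => (hF.differentiable (by simp)).differentiableAt)
          (hd.intervalIntegrable _ _)
      rw [commKernel, if_neg h, hG]
      simp only
      rw [h1, h2, Complex.real_smul]
      push_cast
      field_simp
  have hT : MeasurePreserving (fun z : ℝ × ℝ => (z.1 - z.2, z.2))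
      ((volume : Measure ℝ).prod (volume : Measure ℝ))
      ((volume : Measure ℝ).prod (volume : Measure ℝ)) :=
    measurePreserving_sub_prod volume volume
  have hKG : commKernel α F = G ∘ (fun z : ℝ × ℝ => (z.1 - z.2, z.2)) :=
    funext fun z => hid z.1 z.2
  have hGm : AEStronglyMeasurable G ((volume : Measure ℝ).prod volume) :=
    hα.1.comp_fst.mul hIcont.aestronglyMeasurable
  have hF'mem : MemLp (deriv F) 2 (volume : Measure ℝ) :=
    hd.memLp_of_hasCompactSupport hFc.deriv
  set B := ∫⁻ y : ℝ, (‖deriv F y‖₊ : ℝ≥0∞) ^ (2:ℝ) with hBdef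
  set A := ∫⁻ u : ℝ, (‖α u‖₊ : ℝ≥0∞) ^ (2:ℝ) with hAdef
  have hBtop : B ≠ ⊤ := by
    have h := hF'mem.2
    rw [eLpNorm_eq_lintegral_rpow_enorm_toReal two_ne_zero ENNReal.ofNat_ne_top] at h
    simp only [ENNReal.toReal_ofNat] at h
    intro hB
    change B ^ (1 / 2 : ℝ) < ∞ at h
    rw [hB] at h
    simp [ENNReal.top_rpow_of_pos] at h
  -- the inner Cauchy-Schwarz / translation bound
  have inner : ∀ u : ℝ, (∫⁻ y : ℝ, (‖I (u, y)‖₊ : ℝ≥0∞) ^ (2:ℝ)) ≤ B := by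
    intro u
    have hc1 : Continuous fun q : ℝ × ℝ => deriv F (q.1 * u + q.2) :=
      hd.comp ((continuous_fst.mul continuous_const).add continuous_snd)
    have hgc : Continuous fun q : ℝ × ℝ => ((‖deriv F (q.1 * u + q.2)‖₊ : ℝ≥0∞) ^ (2:ℝ)) :=
      ENNReal.continuous_rpow_const.comp (ENNReal.continuous_coe.comp hc1.nnnorm)
    have step1 : ∀ y : ℝ, (‖I (u, y)‖₊ : ℝ≥0∞)
        ≤ ∫⁻ ρ in Ioc (0:ℝ) 1, (‖deriv F (ρ * u + y)‖₊ : ℝ≥0∞) := by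
      intro y
      rw [hI]
      simp only
      rw [intervalIntegral.integral_of_le zero_le_one]
      exact enorm_integral_le_lintegral_enorm _
    have cs : ∀ y : ℝ, (∫⁻ ρ in Ioc (0:ℝ) 1, (‖deriv F (ρ * u + y)‖₊ : ℝ≥0∞)) ^ (2:ℝ)
        ≤ ∫⁻ ρ in Ioc (0:ℝ) 1, (‖deriv F (ρ * u + y)‖₊ : ℝ≥0∞) ^ (2:ℝ) := by
      intro y
      set g : ℝ → ℝ≥0∞ := fun ρ => (‖deriv F (ρ * u + y)‖₊ : ℝ≥0∞) with hgdef
      have hg : AEMeasurable g (volume.restrict (Ioc (0:ℝ) 1)) :=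
        (ENNReal.continuous_coe.comp
          ((hd.comp ((continuous_id.mul continuous_const).add
            continuous_const)).nnnorm)).measurable.aemeasurable
      have hpq : Real.HolderConjugate 2 2 := Real.HolderConjugate.two_two
      have h := ENNReal.lintegral_mul_le_Lp_mul_Lq (volume.restrict (Ioc (0:ℝ) 1)) hpq hg
        aemeasurable_const (g := fun _ => (1:ℝ≥0∞))
      simp only [Pi.mul_apply, mul_one, ENNReal.one_rpow, lintegral_const,
        Measure.restrict_apply MeasurableSet.univ, univ_inter, Real.volume_Ioc] at h
      simp only [sub_zero, ENNReal.ofReal_one, ENNReal.one_rpow, mul_one] at h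
      calc (∫⁻ ρ in Ioc (0:ℝ) 1, g ρ) ^ (2:ℝ)
          ≤ ((∫⁻ ρ in Ioc (0:ℝ) 1, g ρ ^ (2:ℝ)) ^ (1/2:ℝ)) ^ (2:ℝ) :=
            ENNReal.rpow_le_rpow h (by norm_num)
        _ = ∫⁻ ρ in Ioc (0:ℝ) 1, g ρ ^ (2:ℝ) := by
            rw [← ENNReal.rpow_mul]
            norm_num
    calc (∫⁻ y : ℝ, (‖I (u, y)‖₊ : ℝ≥0∞) ^ (2:ℝ))
        ≤ ∫⁻ y : ℝ, (∫⁻ ρ in Ioc (0:ℝ) 1, (‖deriv F (ρ * u + y)‖₊ : ℝ≥0∞)) ^ (2:ℝ) :=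
          lintegral_mono fun y => ENNReal.rpow_le_rpow (step1 y) (by norm_num)
      _ ≤ ∫⁻ y : ℝ, ∫⁻ ρ in Ioc (0:ℝ) 1, (‖deriv F (ρ * u + y)‖₊ : ℝ≥0∞) ^ (2:ℝ) :=
          lintegral_mono fun y => cs y
      _ = ∫⁻ ρ in Ioc (0:ℝ) 1, ∫⁻ y : ℝ, (‖deriv F (ρ * u + y)‖₊ : ℝ≥0∞) ^ (2:ℝ) := by
          apply lintegral_lintegral_swap
          exact (hgc.comp (continuous_snd.prodMk continuous_fst)).measurable.aemeasurable
      _ = ∫⁻ _ρ in Ioc (0:ℝ) 1, B := by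
          apply setLIntegral_congr_fun measurableSet_Ioc
          refine fun ρ _ => ?_
          rw [hBdef]
          simpa [mul_comm, add_comm] using
            lintegral_add_left_eq_self (fun z => (‖deriv F z‖₊ : ℝ≥0∞) ^ (2:ℝ)) (ρ * u)
      _ = B := by
          simp [Real.volume_Ioc]
  -- main product bound
  have hInorm : AEMeasurable (fun q : ℝ × ℝ => (‖I q‖₊ : ℝ≥0∞) ^ (2:ℝ))
      ((volume : Measure ℝ).prod volume) :=
    (ENNReal.continuous_rpow_const.comp (ENNReal.continuous_coe.comp hIcont.nnnorm)).measurable.aemeasurable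
  have hfst : AEMeasurable (fun q : ℝ × ℝ => (‖α q.1‖₊ : ℝ≥0∞) ^ (2:ℝ))
      ((volume : Measure ℝ).prod volume) :=
    ENNReal.continuous_rpow_const.measurable.comp_aemeasurable hα.1.comp_fst.enorm
  have main : (∫⁻ q : ℝ × ℝ, (‖G q‖₊ : ℝ≥0∞) ^ (2:ℝ) ∂((volume : Measure ℝ).prod volume))
      ≤ A * B := by
    have hGnorm : ∀ q : ℝ × ℝ, (‖G q‖₊ : ℝ≥0∞) ^ (2:ℝ)
        = (‖α q.1‖₊ : ℝ≥0∞) ^ (2:ℝ) * (‖I q‖₊ : ℝ≥0∞) ^ (2:ℝ) := by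
      intro q
      rw [hG]
      simp only [nnnorm_mul, ENNReal.coe_mul]
      rw [ENNReal.mul_rpow_of_nonneg _ _ (by norm_num : (0:ℝ) ≤ 2)]
    calc (∫⁻ q : ℝ × ℝ, (‖G q‖₊ : ℝ≥0∞) ^ (2:ℝ) ∂((volume : Measure ℝ).prod volume))
        = ∫⁻ u : ℝ, ∫⁻ y : ℝ, (‖α u‖₊ : ℝ≥0∞) ^ (2:ℝ) * (‖I (u, y)‖₊ : ℝ≥0∞) ^ (2:ℝ) := by
          simp_rw [hGnorm]
          exact lintegral_prod _ (hfst.mul hInorm)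
      _ = ∫⁻ u : ℝ, (‖α u‖₊ : ℝ≥0∞) ^ (2:ℝ) * ∫⁻ y : ℝ, (‖I (u, y)‖₊ : ℝ≥0∞) ^ (2:ℝ) := by
          refine lintegral_congr fun u => ?_
          exact lintegral_const_mul' _ _
            (ENNReal.rpow_ne_top_of_nonneg (by norm_num) ENNReal.coe_ne_top)
      _ ≤ ∫⁻ u : ℝ, (‖α u‖₊ : ℝ≥0∞) ^ (2:ℝ) * B :=
          lintegral_mono fun u => mul_le_mul_right (inner u) _
      _ = A * B := lintegral_mul_const' B _ hBtop
  -- put everything together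
  have hvol : (volume : Measure (ℝ × ℝ)) = (volume : Measure ℝ).prod volume :=
    (Measure.volume_eq_prod ℝ ℝ)
  have hKae : AEStronglyMeasurable (commKernel α F) (volume : Measure (ℝ × ℝ)) := by
    rw [hvol, hKG]
    exact hGm.comp_measurePreserving hT
  have heq : eLpNorm (commKernel α F) 2 (volume : Measure (ℝ × ℝ))
      = eLpNorm G 2 ((volume : Measure ℝ).prod volume) := by
    rw [hvol, hKG]
    exact eLpNorm_comp_measurePreserving hGm hT
  have hGle : eLpNorm G 2 ((volume : Measure ℝ).prod volume)
      ≤ eLpNorm α 2 (volume : Measure ℝ) * eLpNorm (deriv F) 2 (volume : Measure ℝ) := by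
    rw [eLpNorm_eq_lintegral_rpow_enorm_toReal two_ne_zero ENNReal.ofNat_ne_top,
      eLpNorm_eq_lintegral_rpow_enorm_toReal two_ne_zero ENNReal.ofNat_ne_top,
      eLpNorm_eq_lintegral_rpow_enorm_toReal two_ne_zero ENNReal.ofNat_ne_top]
    simp only [ENNReal.toReal_ofNat]
    calc (∫⁻ q : ℝ × ℝ, (‖G q‖₊ : ℝ≥0∞) ^ (2:ℝ) ∂((volume : Measure ℝ).prod volume)) ^ (1/2:ℝ)
        ≤ (A * B) ^ (1/2:ℝ) := ENNReal.rpow_le_rpow main (by norm_num)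
      _ = A ^ (1/2:ℝ) * B ^ (1/2:ℝ) := ENNReal.mul_rpow_of_nonneg _ _ (by norm_num)
  refine ⟨⟨hKae, ?_⟩, ?_⟩
  · rw [heq]
    exact lt_of_le_of_lt hGle (ENNReal.mul_lt_top hα.2 hF'mem.2)
  · rw [heq]
    exact hGle
end

section
/- Let α ∈ L²(ℝ; ℂ) and let F : ℝ → ℂ be smooth with compact support, and set K(x,y) = α(x−y)·(F(x)−F(y))/(x−y) for x ≠ y, K(x,x) = α(0)·F′(x). Then for every v ∈ L²(ℝ; ℂ), the integral A v (x) = ∫_ℝ K(x,y) v(y) dy converges for almost every x, A v ∈ L²(ℝ; ℂ), and ‖A v‖_{L²} ≤ ‖α‖_{L²}·‖F′‖_{L²}·‖v‖_{L²}. -/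
open MeasureTheory

open Set
open scoped ENNReal



lemma hs_bound (K : ℝ × ℝ → ℂ) (hK : AEStronglyMeasurable K (((volume : Measure ℝ).prod volume)))
    (I : ℝ≥0∞) (hI : I ≠ ⊤)
    (hKI : ∫⁻ p, (‖K p‖₊ : ℝ≥0∞) ^ (2:ℝ) ∂(((volume : Measure ℝ).prod volume)) ≤ I)
    (v : ℝ → ℂ) (hv : MemLp v 2 volume) :
    (∀ᵐ x : ℝ, Integrable (fun y => K (x, y) * v y) volume) ∧
    MemLp (fun x => ∫ y, K (x, y) * v y) 2 volume ∧
    eLpNorm (fun x => ∫ y, K (x, y) * v y) 2 volume ≤ I ^ (1/2 : ℝ) * eLpNorm v 2 volume := by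
  have h22 : (2:ℝ).HolderConjugate 2 := ⟨by norm_num, by norm_num, by norm_num⟩
  have htr : ((2:ℝ≥0∞)).toReal = (2:ℝ) := by norm_num
  have hVeq : eLpNorm v 2 volume = (∫⁻ y, (‖v y‖₊ : ℝ≥0∞) ^ (2:ℝ) ∂(volume : Measure ℝ)) ^ (1/2 : ℝ) := by
    simp only [eLpNorm_eq_lintegral_rpow_enorm_toReal (by norm_num : (2:ℝ≥0∞) ≠ 0) (by norm_num : (2:ℝ≥0∞) ≠ ⊤), htr, enorm_eq_nnnorm]
  have hVne : eLpNorm v 2 volume ≠ ⊤ := hv.2.ne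
  have hKm : AEMeasurable (fun p : ℝ × ℝ => (‖K p‖₊ : ℝ≥0∞) ^ (2:ℝ)) (((volume : Measure ℝ).prod volume)) :=
    hK.enorm.pow_const _
  set g : ℝ → ℝ≥0∞ := fun x => ∫⁻ y, (‖K (x, y)‖₊ : ℝ≥0∞) ^ (2:ℝ) ∂(volume : Measure ℝ) with hg
  have tonelli : ∫⁻ x, g x ∂(volume : Measure ℝ) = ∫⁻ p, (‖K p‖₊ : ℝ≥0∞) ^ (2:ℝ) ∂(((volume : Measure ℝ).prod volume)) :=
    (lintegral_prod _ hKm).symm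
  have hgm : AEMeasurable g volume := by
    have hmk : Measurable fun x => ∫⁻ y, hKm.mk _ (x, y) ∂(volume : Measure ℝ) :=
      Measurable.lintegral_prod_right' hKm.measurable_mk
    refine hmk.aemeasurable.congr ?_
    filter_upwards [Measure.ae_ae_of_ae_prod hKm.ae_eq_mk] with x hx
    exact (lintegral_congr_ae hx).symm
  have hgfin : ∀ᵐ x ∂(volume : Measure ℝ), g x < ⊤ :=
    ae_lt_top' hgm (by rw [tonelli]; exact (lt_of_le_of_lt hKI hI.lt_top).ne)
  have hsec : ∀ᵐ x ∂(volume : Measure ℝ), AEStronglyMeasurable (fun y => K (x, y)) volume := hK.prodMk_left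
  -- a.e. x : K (x, ·) ∈ L²
  have hmem : ∀ᵐ x ∂(volume : Measure ℝ), MemLp (fun y => K (x, y)) 2 volume := by
    filter_upwards [hgfin, hsec] with x hx hxm
    refine ⟨hxm, ?_⟩
    simp only [eLpNorm_eq_lintegral_rpow_enorm_toReal (by norm_num : (2:ℝ≥0∞) ≠ 0) (by norm_num : (2:ℝ≥0∞) ≠ ⊤), htr, enorm_eq_nnnorm]
    exact ENNReal.rpow_lt_top_of_nonneg (by norm_num) (show g x ≠ ⊤ from hx.ne)
  -- integrability
  have hInt : ∀ᵐ x ∂(volume : Measure ℝ), Integrable (fun y => K (x, y) * v y) volume := by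
    filter_upwards [hmem] with x hx
    have := (memLp_one_iff_integrable).1 (hx.smul (p := 2) (q := 2) (r := 1) hv)
    simpa [smul_eq_mul, mul_comm, Pi.mul_def] using this
  -- pointwise bound on the integral
  have hptw : ∀ᵐ x ∂(volume : Measure ℝ), (‖∫ y, K (x, y) * v y ∂(volume : Measure ℝ)‖₊ : ℝ≥0∞)
      ≤ g x ^ (1/2 : ℝ) * eLpNorm v 2 volume := by
    filter_upwards [hsec] with x hxm
    calc (‖∫ y, K (x, y) * v y ∂(volume : Measure ℝ)‖₊ : ℝ≥0∞)
        ≤ ∫⁻ y, (‖K (x, y) * v y‖₊ : ℝ≥0∞) ∂(volume : Measure ℝ) := enorm_integral_le_lintegral_enorm _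
      _ = ∫⁻ y, ((fun y => (‖K (x, y)‖₊ : ℝ≥0∞)) * fun y => (‖v y‖₊ : ℝ≥0∞)) y ∂(volume : Measure ℝ) := by
          simp [nnnorm_mul, ENNReal.coe_mul]
      _ ≤ (∫⁻ y, (‖K (x, y)‖₊ : ℝ≥0∞) ^ (2:ℝ) ∂(volume : Measure ℝ)) ^ (1/2 : ℝ)
            * (∫⁻ y, (‖v y‖₊ : ℝ≥0∞) ^ (2:ℝ) ∂(volume : Measure ℝ)) ^ (1/2 : ℝ) :=
          ENNReal.lintegral_mul_le_Lp_mul_Lq volume h22 hxm.enorm hv.1.enorm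
      _ = g x ^ (1/2 : ℝ) * eLpNorm v 2 volume := by rw [hVeq]
  -- measurability of the integral function
  have hAm : AEStronglyMeasurable (fun x => ∫ y, K (x, y) * v y ∂(volume : Measure ℝ)) volume := by
    have : AEStronglyMeasurable (fun p : ℝ × ℝ => K p * v p.2) (((volume : Measure ℝ).prod volume)) :=
      hK.mul (hv.1.comp_snd)
    exact this.integral_prod_right'
  -- the L² bound
  have hbound : eLpNorm (fun x => ∫ y, K (x, y) * v y ∂(volume : Measure ℝ)) 2 volume
      ≤ I ^ (1/2 : ℝ) * eLpNorm v 2 volume := by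
    rw [eLpNorm_eq_lintegral_rpow_enorm_toReal (by norm_num) (by norm_num), htr]
    calc (∫⁻ x, (‖∫ y, K (x, y) * v y ∂(volume : Measure ℝ)‖₊ : ℝ≥0∞) ^ (2:ℝ) ∂(volume : Measure ℝ)) ^ (1/2 : ℝ)
        ≤ (∫⁻ x, (g x ^ (1/2 : ℝ) * eLpNorm v 2 volume) ^ (2:ℝ) ∂(volume : Measure ℝ)) ^ (1/2 : ℝ) := by
          refine ENNReal.rpow_le_rpow (lintegral_mono_ae ?_) (by norm_num)
          filter_upwards [hptw] with x hx
          exact ENNReal.rpow_le_rpow hx (by norm_num)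
      _ = (∫⁻ x, g x * (eLpNorm v 2 volume) ^ (2:ℝ) ∂(volume : Measure ℝ)) ^ (1/2 : ℝ) := by
          congr 1
          refine lintegral_congr fun x => ?_
          rw [ENNReal.mul_rpow_of_nonneg _ _ (by norm_num), ← ENNReal.rpow_mul]
          norm_num
      _ = ((∫⁻ x, g x ∂(volume : Measure ℝ)) * (eLpNorm v 2 volume) ^ (2:ℝ)) ^ (1/2 : ℝ) := by
          rw [lintegral_mul_const'' _ hgm]
      _ ≤ (I * (eLpNorm v 2 volume) ^ (2:ℝ)) ^ (1/2 : ℝ) := by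
          gcongr
          rw [tonelli]; exact hKI
      _ = I ^ (1/2 : ℝ) * eLpNorm v 2 volume := by
          rw [ENNReal.mul_rpow_of_nonneg _ _ (by norm_num), ← ENNReal.rpow_mul]
          norm_num
  refine ⟨hInt, ⟨hAm, ?_⟩, hbound⟩
  exact lt_of_le_of_lt hbound (ENNReal.mul_lt_top
    (ENNReal.rpow_lt_top_of_nonneg (by norm_num) hI) hVne.lt_top)

-- Cauchy–Schwarz for the difference quotient
lemma cs_lemma (F : ℝ → ℂ) (hF : ContDiff ℝ (⊤ : ℕ∞) F) (x y : ℝ) :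
    (‖F x - F y‖₊ : ℝ≥0∞)
      ≤ (ENNReal.ofReal |x - y|) ^ (1/2:ℝ)
        * (∫⁻ s in Set.uIoc y x, (‖deriv F s‖₊ : ℝ≥0∞) ^ (2:ℝ) ∂volume) ^ (1/2:ℝ) := by
  have h22 : (2:ℝ).HolderConjugate 2 := ⟨by norm_num, by norm_num, by norm_num⟩
  have hGc : Continuous (deriv F) := hF.continuous_deriv (by simp)
  have h1 : F x - F y = ∫ s in y..x, deriv F s :=
    (intervalIntegral.integral_deriv_eq_sub
      (fun s _ => (hF.differentiable (by simp)).differentiableAt)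
      (hGc.intervalIntegrable _ _)).symm
  have h2 : (‖F x - F y‖₊ : ℝ≥0∞) ≤ ∫⁻ s in Set.uIoc y x, (‖deriv F s‖₊ : ℝ≥0∞) ∂volume := by
    rw [h1, intervalIntegral.intervalIntegral_eq_integral_uIoc]
    have : ‖(if y ≤ x then (1:ℝ) else -1) • ∫ s in Set.uIoc y x, deriv F s ∂volume‖₊
        = ‖∫ s in Set.uIoc y x, deriv F s ∂volume‖₊ := by
      split_ifs <;> simp
    rw [show (Set.uIoc y x) = Set.uIoc y x from rfl, this]
    exact enorm_integral_le_lintegral_enorm _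
  have hvol : volume (Set.uIoc y x) = ENNReal.ofReal |x - y| := by
    rw [Set.uIoc, Real.volume_Ioc, max_sub_min_eq_abs, abs_sub_comm]
  have h3 : (∫⁻ s in Set.uIoc y x, (‖deriv F s‖₊ : ℝ≥0∞) ∂volume)
      ≤ (∫⁻ s in Set.uIoc y x, (‖deriv F s‖₊ : ℝ≥0∞) ^ (2:ℝ) ∂volume) ^ (1/2:ℝ)
        * (ENNReal.ofReal |x - y|) ^ (1/2:ℝ) := by
    have := ENNReal.lintegral_mul_le_Lp_mul_Lq (volume.restrict (Set.uIoc y x)) h22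
      (f := fun s => (‖deriv F s‖₊ : ℝ≥0∞)) (g := fun _ => 1)
      hGc.measurable.enorm.aemeasurable aemeasurable_const
    simpa [ENNReal.one_rpow, Measure.restrict_apply_univ, hvol] using this
  calc (‖F x - F y‖₊ : ℝ≥0∞) ≤ _ := h2
    _ ≤ _ := h3
    _ = _ := mul_comm _ _

-- pointwise bound on the off-diagonal kernel
lemma ptw_lemma (α' F : ℝ → ℂ) (hF : ContDiff ℝ (⊤ : ℕ∞) F) {x y : ℝ} (hxy : x ≠ y) :
    (‖α' (x - y) * ((F x - F y) / ((x:ℂ) - (y:ℂ)))‖₊ : ℝ≥0∞) ^ (2:ℝ)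
      ≤ (‖α' (x - y)‖₊ : ℝ≥0∞) ^ (2:ℝ)
        * ((ENNReal.ofReal |x - y|)⁻¹
           * ∫⁻ s in Set.uIoc y x, (‖deriv F s‖₊ : ℝ≥0∞) ^ (2:ℝ) ∂volume) := by
  set d : ℝ≥0∞ := ENNReal.ofReal |x - y| with hd
  set Ig : ℝ≥0∞ := ∫⁻ s in Set.uIoc y x, (‖deriv F s‖₊ : ℝ≥0∞) ^ (2:ℝ) ∂volume with hIg
  have hd0 : d ≠ 0 := by
    simp only [hd, ne_eq, ENNReal.ofReal_eq_zero, not_le]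
    exact abs_pos.2 (sub_ne_zero.2 hxy)
  have hdt : d ≠ ⊤ := ENNReal.ofReal_ne_top
  have hcnn : ‖((x:ℂ) - (y:ℂ))‖₊ = ‖x - y‖₊ := by
    rw [← Complex.ofReal_sub]
    exact NNReal.coe_injective (by
      simp only [coe_nnnorm, Complex.norm_real, Real.norm_eq_abs])
  have hcd : (‖((x:ℂ) - (y:ℂ))‖₊ : ℝ≥0∞) = d := by
    rw [hcnn, hd, ← Real.norm_eq_abs, ofReal_norm, enorm_eq_nnnorm]
  have hc0 : ‖((x:ℂ) - (y:ℂ))‖₊ ≠ 0 := by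
    simp only [ne_eq, nnnorm_eq_zero, sub_eq_zero]
    exact_mod_cast fun h => hxy (by exact_mod_cast h)
  have hexp : (‖α' (x - y) * ((F x - F y) / ((x:ℂ) - (y:ℂ)))‖₊ : ℝ≥0∞)
      = (‖α' (x - y)‖₊ : ℝ≥0∞) * ((‖F x - F y‖₊ : ℝ≥0∞) * d⁻¹) := by
    rw [nnnorm_mul, nnnorm_div, ENNReal.coe_mul, div_eq_mul_inv, ENNReal.coe_mul,
      ENNReal.coe_inv hc0, hcd]
  have hN : (‖F x - F y‖₊ : ℝ≥0∞) ^ (2:ℝ) ≤ d * Ig := by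
    have := cs_lemma F hF x y
    rw [← hd, ← hIg] at this
    calc (‖F x - F y‖₊ : ℝ≥0∞) ^ (2:ℝ)
        ≤ (d ^ (1/2:ℝ) * Ig ^ (1/2:ℝ)) ^ (2:ℝ) := ENNReal.rpow_le_rpow this (by norm_num)
      _ = d * Ig := by
          rw [ENNReal.mul_rpow_of_nonneg _ _ (by norm_num : (0:ℝ) ≤ 2),
            ← ENNReal.rpow_mul, ← ENNReal.rpow_mul]
          norm_num
  rw [hexp, ENNReal.mul_rpow_of_nonneg _ _ (by norm_num : (0:ℝ) ≤ 2),
    ENNReal.mul_rpow_of_nonneg _ _ (by norm_num : (0:ℝ) ≤ 2)]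
  have h2 : (d⁻¹) ^ (2:ℝ) = d⁻¹ * d⁻¹ := by
    rw [show (2:ℝ) = ((2:ℕ) : ℝ) by norm_num, ENNReal.rpow_natCast]
    ring
  calc (‖α' (x - y)‖₊ : ℝ≥0∞) ^ (2:ℝ) * ((‖F x - F y‖₊ : ℝ≥0∞) ^ (2:ℝ) * (d⁻¹) ^ (2:ℝ))
      ≤ (‖α' (x - y)‖₊ : ℝ≥0∞) ^ (2:ℝ) * ((d * Ig) * (d⁻¹) ^ (2:ℝ)) := by gcongr
    _ = (‖α' (x - y)‖₊ : ℝ≥0∞) ^ (2:ℝ) * ((d * d⁻¹) * (d⁻¹ * Ig)) := by rw [h2]; ring_nf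
    _ = (‖α' (x - y)‖₊ : ℝ≥0∞) ^ (2:ℝ) * (d⁻¹ * Ig) := by
        rw [ENNReal.mul_inv_cancel hd0 hdt, one_mul]

lemma indicator_section_eq (gE : ℝ → ℝ≥0∞) (u s : ℝ) :
    (fun y => Set.indicator (Set.uIoc y (y + u)) gE s)
      = Set.indicator (Set.Ico (s - max u 0) (s - min u 0)) (fun _ => gE s) := by
  funext y
  have hiff : s ∈ Set.uIoc y (y + u) ↔ y ∈ Set.Ico (s - max u 0) (s - min u 0) := by
    rcases le_total 0 u with hu | hu
    · rw [Set.uIoc_of_le (by linarith : y ≤ y + u), max_eq_left hu, min_eq_right hu]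
      simp only [Set.mem_Ioc, Set.mem_Ico, sub_zero]
      constructor <;> rintro ⟨h1, h2⟩ <;> constructor <;> linarith
    · rw [Set.uIoc_of_ge (by linarith : y + u ≤ y), max_eq_right hu, min_eq_left hu]
      simp only [Set.mem_Ioc, Set.mem_Ico, sub_zero]
      constructor <;> rintro ⟨h1, h2⟩ <;> constructor <;> linarith
  by_cases h : y ∈ Set.Ico (s - max u 0) (s - min u 0)
  · rw [Set.indicator_of_mem (hiff.mpr h), Set.indicator_of_mem h]
  · rw [Set.indicator_of_notMem (fun hs => h (hiff.mp hs)), Set.indicator_of_notMem h]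

lemma J_lemma (gE : ℝ → ℝ≥0∞) (hgE : Measurable gE) (u : ℝ) :
    ∫⁻ y, (∫⁻ s in Set.uIoc y (y + u), gE s ∂volume) ∂volume
      = (∫⁻ s, gE s ∂volume) * ENNReal.ofReal |u| := by
  have hmeas2 : MeasurableSet {w : ℝ × ℝ | w.2 ∈ Set.uIoc w.1 (w.1 + u)} := by
    have : {w : ℝ × ℝ | w.2 ∈ Set.uIoc w.1 (w.1 + u)}
        = {w : ℝ × ℝ | w.1 ⊓ (w.1 + u) < w.2} ∩ {w : ℝ × ℝ | w.2 ≤ w.1 ⊔ (w.1 + u)} := by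
      ext w; simp [Set.uIoc, Set.mem_Ioc, Set.mem_inter_iff]
    rw [this]
    exact (measurableSet_lt (measurable_fst.min (measurable_fst.add_const u)) measurable_snd).inter
      (measurableSet_le measurable_snd (measurable_fst.max (measurable_fst.add_const u)))
  have hind : (fun w : ℝ × ℝ => Set.indicator (Set.uIoc w.1 (w.1 + u)) gE w.2)
      = Set.indicator {w : ℝ × ℝ | w.2 ∈ Set.uIoc w.1 (w.1 + u)} (fun w => gE w.2) := by
    funext w
    by_cases h : w.2 ∈ Set.uIoc w.1 (w.1 + u) <;> simp [Set.indicator_apply, h]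
  have hm : Measurable fun w : ℝ × ℝ => Set.indicator (Set.uIoc w.1 (w.1 + u)) gE w.2 := by
    rw [hind]; exact (hgE.comp measurable_snd).indicator hmeas2
  calc ∫⁻ y, (∫⁻ s in Set.uIoc y (y + u), gE s ∂volume) ∂volume
      = ∫⁻ y, ∫⁻ s, Set.indicator (Set.uIoc y (y + u)) gE s ∂volume ∂volume := by
        refine lintegral_congr fun y => ?_
        rw [lintegral_indicator measurableSet_uIoc]
    _ = ∫⁻ s, ∫⁻ y, Set.indicator (Set.uIoc y (y + u)) gE s ∂volume ∂volume :=
        lintegral_lintegral_swap hm.aemeasurable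
    _ = ∫⁻ s, gE s * ENNReal.ofReal |u| ∂volume := by
        refine lintegral_congr fun s => ?_
        rw [indicator_section_eq gE u s, lintegral_indicator_const measurableSet_Ico,
          Real.volume_Ico]
        congr 1
        rw [show s - min u 0 - (s - max u 0) = max u 0 - min u 0 by ring,
          max_sub_min_eq_abs]
        simp
    _ = (∫⁻ s, gE s ∂volume) * ENNReal.ofReal |u| := lintegral_mul_const _ hgE

lemma double_lemma (α' F : ℝ → ℂ) (hα' : Measurable α') (hF : ContDiff ℝ (⊤ : ℕ∞) F) :
    ∫⁻ p : ℝ × ℝ, (‖α' (p.1 - p.2)‖₊ : ℝ≥0∞) ^ (2:ℝ)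
        * ((ENNReal.ofReal |p.1 - p.2|)⁻¹
           * ∫⁻ s in Set.uIoc p.2 p.1, (‖deriv F s‖₊ : ℝ≥0∞) ^ (2:ℝ) ∂volume)
      ∂((volume : Measure ℝ).prod volume)
      ≤ (∫⁻ u, (‖α' u‖₊ : ℝ≥0∞) ^ (2:ℝ) ∂volume)
        * ∫⁻ s, (‖deriv F s‖₊ : ℝ≥0∞) ^ (2:ℝ) ∂volume := by
  set gE : ℝ → ℝ≥0∞ := fun s => (‖deriv F s‖₊ : ℝ≥0∞) ^ (2:ℝ) with hgEdef
  have hgE : Measurable gE := ((hF.continuous_deriv (by simp)).measurable.enorm).pow_const _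
  set Gn : ℝ≥0∞ := ∫⁻ s, gE s ∂volume with hGn
  set a : ℝ → ℝ≥0∞ := fun u => (‖α' u‖₊ : ℝ≥0∞) ^ (2:ℝ) with ha
  have ham : Measurable a := (hα'.enorm).pow_const _
  -- measurability of the inner set-integral as a function of (u, y)
  have hmeas3 : MeasurableSet {z : (ℝ × ℝ) × ℝ | z.2 ∈ Set.uIoc z.1.2 (z.1.2 + z.1.1)} := by
    have : {z : (ℝ × ℝ) × ℝ | z.2 ∈ Set.uIoc z.1.2 (z.1.2 + z.1.1)}
        = {z : (ℝ × ℝ) × ℝ | z.1.2 ⊓ (z.1.2 + z.1.1) < z.2}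
          ∩ {z : (ℝ × ℝ) × ℝ | z.2 ≤ z.1.2 ⊔ (z.1.2 + z.1.1)} := by
      ext z; simp [Set.uIoc, Set.mem_Ioc, Set.mem_inter_iff]
    rw [this]
    exact (measurableSet_lt (measurable_fst.snd.min (measurable_fst.snd.add measurable_fst.fst))
        measurable_snd).inter
      (measurableSet_le measurable_snd
        (measurable_fst.snd.max (measurable_fst.snd.add measurable_fst.fst)))
  have hSm : Measurable fun q : ℝ × ℝ => ∫⁻ s in Set.uIoc q.2 (q.2 + q.1), gE s ∂volume := by
    have hind : (fun z : (ℝ × ℝ) × ℝ => Set.indicator (Set.uIoc z.1.2 (z.1.2 + z.1.1)) gE z.2)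
        = Set.indicator {z : (ℝ × ℝ) × ℝ | z.2 ∈ Set.uIoc z.1.2 (z.1.2 + z.1.1)}
          (fun z => gE z.2) := by
      funext z
      by_cases h : z.2 ∈ Set.uIoc z.1.2 (z.1.2 + z.1.1) <;> simp [Set.indicator_apply, h]
    have hm : Measurable fun z : (ℝ × ℝ) × ℝ =>
        Set.indicator (Set.uIoc z.1.2 (z.1.2 + z.1.1)) gE z.2 := by
      rw [hind]; exact (hgE.comp measurable_snd).indicator hmeas3
    have heq : (fun q : ℝ × ℝ => ∫⁻ s in Set.uIoc q.2 (q.2 + q.1), gE s ∂volume)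
        = fun q : ℝ × ℝ => ∫⁻ s, Set.indicator (Set.uIoc q.2 (q.2 + q.1)) gE s ∂volume :=
      funext fun q => (lintegral_indicator measurableSet_uIoc _).symm
    rw [heq]
    exact Measurable.lintegral_prod_right' hm
  have hdm : Measurable fun q : ℝ × ℝ => (ENNReal.ofReal |q.1|)⁻¹ :=
    ((measurable_fst.comp measurable_id).abs.ennreal_ofReal).inv
  have hfm : Measurable fun q : ℝ × ℝ => a q.1
      * ((ENNReal.ofReal |q.1|)⁻¹ * ∫⁻ s in Set.uIoc q.2 (q.2 + q.1), gE s ∂volume) :=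
    (ham.comp measurable_fst).mul (hdm.mul hSm)
  have hcomp := (measurePreserving_sub_prod (volume : Measure ℝ) volume).lintegral_comp hfm
  have hlhs : ∫⁻ p : ℝ × ℝ, a (p.1 - p.2)
      * ((ENNReal.ofReal |p.1 - p.2|)⁻¹ * ∫⁻ s in Set.uIoc p.2 p.1, gE s ∂volume)
      ∂((volume : Measure ℝ).prod volume)
      = ∫⁻ q : ℝ × ℝ, a q.1
        * ((ENNReal.ofReal |q.1|)⁻¹ * ∫⁻ s in Set.uIoc q.2 (q.2 + q.1), gE s ∂volume)
        ∂((volume : Measure ℝ).prod volume) := by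
    rw [← hcomp]
    refine lintegral_congr fun p => ?_
    rw [show p.2 + (p.1 - p.2) = p.1 from by ring]
  rw [show (fun p : ℝ × ℝ => (‖α' (p.1 - p.2)‖₊ : ℝ≥0∞) ^ (2:ℝ)
      * ((ENNReal.ofReal |p.1 - p.2|)⁻¹ * ∫⁻ s in Set.uIoc p.2 p.1, gE s ∂volume))
      = fun p : ℝ × ℝ => a (p.1 - p.2)
      * ((ENNReal.ofReal |p.1 - p.2|)⁻¹ * ∫⁻ s in Set.uIoc p.2 p.1, gE s ∂volume) from rfl]
  rw [hlhs, MeasureTheory.lintegral_prod _ hfm.aemeasurable]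
  have hinner : ∀ u : ℝ, (∫⁻ y, a u
      * ((ENNReal.ofReal |u|)⁻¹ * ∫⁻ s in Set.uIoc y (y + u), gE s ∂volume) ∂volume)
      = a u * ((ENNReal.ofReal |u|)⁻¹ * (Gn * ENNReal.ofReal |u|)) := by
    intro u
    have hc : (fun y : ℝ => a u
        * ((ENNReal.ofReal |u|)⁻¹ * ∫⁻ s in Set.uIoc y (y + u), gE s ∂volume))
        = fun y : ℝ => (a u * (ENNReal.ofReal |u|)⁻¹)
          * ∫⁻ s in Set.uIoc y (y + u), gE s ∂volume := funext fun y => by ring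
    rw [hc, lintegral_const_mul'' _ (show AEMeasurable (fun y : ℝ => ∫⁻ s in Set.uIoc y (y + u), gE s ∂volume) volume from
        (hSm.comp measurable_prodMk_left).aemeasurable),
      J_lemma gE hgE u]
    ring
  simp only [hinner]
  have h0 : ∀ᵐ u : ℝ ∂volume, u ≠ (0:ℝ) := by
    refine ae_iff.mpr ?_
    have : {u : ℝ | ¬ u ≠ 0} = {0} := by ext u; simp
    rw [this]; exact measure_singleton 0
  have hae : ∀ᵐ u : ℝ ∂volume, a u * ((ENNReal.ofReal |u|)⁻¹ * (Gn * ENNReal.ofReal |u|))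
      = a u * Gn := by
    filter_upwards [h0] with u hu
    have hd0 : ENNReal.ofReal |u| ≠ 0 := by
      simp only [ne_eq, ENNReal.ofReal_eq_zero, not_le]
      exact abs_pos.2 hu
    have hdt : ENNReal.ofReal |u| ≠ ⊤ := ENNReal.ofReal_ne_top
    rw [show (ENNReal.ofReal |u|)⁻¹ * (Gn * ENNReal.ofReal |u|)
        = Gn * ((ENNReal.ofReal |u|)⁻¹ * ENNReal.ofReal |u|) by ring,
      ENNReal.inv_mul_cancel hd0 hdt, mul_one]
  rw [lintegral_congr_ae hae, lintegral_mul_const _ ham]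

/-- If `α ∈ L²(ℝ; ℂ)` and `F` is smooth with compact support then, for every `v ∈ L²(ℝ; ℂ)`,
the integral `A v (x) = ∫ K(x,y) v(y) dy` converges for a.e. `x`, `A v ∈ L²(ℝ; ℂ)`, and
`‖A v‖_{L²} ≤ ‖α‖_{L²}·‖F′‖_{L²}·‖v‖_{L²}`. -/
theorem commKernel_hilbertSchmidt_bound
    (α F : ℝ → ℂ) (hα : MemLp α 2 (volume : Measure ℝ))
    (hF : ContDiff ℝ (⊤ : ℕ∞) F) (hFc : HasCompactSupport F)
    (v : ℝ → ℂ) (hv : MemLp v 2 (volume : Measure ℝ)) :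
    (∀ᵐ x : ℝ, Integrable (fun y => commKernel α F (x, y) * v y) volume) ∧
    MemLp (fun x => ∫ y, commKernel α F (x, y) * v y) 2 (volume : Measure ℝ) ∧
    eLpNorm (fun x => ∫ y, commKernel α F (x, y) * v y) 2 (volume : Measure ℝ)
      ≤ eLpNorm α 2 (volume : Measure ℝ) * eLpNorm (deriv F) 2 (volume : Measure ℝ)
        * eLpNorm v 2 (volume : Measure ℝ) := by
  classical
  have hGc : Continuous (deriv F) := hF.continuous_deriv (by simp)
  have hGmem : MemLp (deriv F) 2 (volume : Measure ℝ) :=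
    hGc.memLp_of_hasCompactSupport hFc.deriv
  have htr : ((2:ℝ≥0∞)).toReal = (2:ℝ) := by norm_num
  set A : ℝ≥0∞ := ∫⁻ u, (‖α u‖₊ : ℝ≥0∞) ^ (2:ℝ) ∂(volume : Measure ℝ) with hA
  set Gn : ℝ≥0∞ := ∫⁻ s, (‖deriv F s‖₊ : ℝ≥0∞) ^ (2:ℝ) ∂(volume : Measure ℝ) with hGn2
  have hAeq : eLpNorm α 2 volume = A ^ (1/2:ℝ) := by
    simp only [eLpNorm_eq_lintegral_rpow_enorm_toReal (by norm_num : (2:ℝ≥0∞) ≠ 0) (by norm_num : (2:ℝ≥0∞) ≠ ⊤), htr, enorm_eq_nnnorm]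
    rfl
  have hGeq : eLpNorm (deriv F) 2 volume = Gn ^ (1/2:ℝ) := by
    simp only [eLpNorm_eq_lintegral_rpow_enorm_toReal (by norm_num : (2:ℝ≥0∞) ≠ 0) (by norm_num : (2:ℝ≥0∞) ≠ ⊤), htr, enorm_eq_nnnorm]
    rfl
  have hAne : A ≠ ⊤ := by
    intro h
    have h2 := hα.2.ne
    rw [hAeq, h, ENNReal.top_rpow_of_pos (by norm_num)] at h2
    exact h2 rfl
  have hGne : Gn ≠ ⊤ := by
    intro h
    have h2 := hGmem.2.ne
    rw [hGeq, h, ENNReal.top_rpow_of_pos (by norm_num)] at h2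
    exact h2 rfl
  -- measurable representative of α
  set α' : ℝ → ℂ := hα.1.mk α with hα'def
  have hα'm : Measurable α' := hα.1.stronglyMeasurable_mk.measurable
  have hαα' : α =ᵐ[(volume : Measure ℝ)] α' := hα.1.ae_eq_mk
  -- the diagonal is null
  have hdiagae : ∀ᵐ p : ℝ × ℝ ∂((volume : Measure ℝ).prod volume), p.1 ≠ p.2 := by
    rw [ae_iff]
    have hD : MeasurableSet {p : ℝ × ℝ | p.1 = p.2} :=
      measurableSet_eq_fun measurable_fst measurable_snd
    have h1 : {p : ℝ × ℝ | ¬ p.1 ≠ p.2} = {p : ℝ × ℝ | p.1 = p.2} := by ext p; simp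
    rw [h1, Measure.prod_apply hD]
    have h2 : ∀ x : ℝ, (Prod.mk x ⁻¹' {p : ℝ × ℝ | p.1 = p.2}) = {x} := by
      intro x; ext y; simp [eq_comm]
    simp [h2]
  -- α ∘ sub agrees a.e. with α' ∘ sub on the product
  have qmp : Measure.QuasiMeasurePreserving (fun p : ℝ × ℝ => p.1 - p.2)
      ((volume : Measure ℝ).prod volume) (volume : Measure ℝ) :=
    Measure.quasiMeasurePreserving_fst.comp
      (measurePreserving_sub_prod (volume : Measure ℝ) volume).quasiMeasurePreserving
  have hαae : ∀ᵐ p : ℝ × ℝ ∂((volume : Measure ℝ).prod volume),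
      α (p.1 - p.2) = α' (p.1 - p.2) := by
    have hN : (volume : Measure ℝ) {u : ℝ | ¬ α u = α' u} = 0 := ae_iff.mp hαα'
    have := qmp.preimage_null hN
    rw [ae_iff]
    convert this using 2
    rfl
  set K' : ℝ × ℝ → ℂ :=
    fun p => α' (p.1 - p.2) * ((F p.1 - F p.2) / ((p.1 : ℂ) - (p.2 : ℂ))) with hK'def
  have hK'm : Measurable K' := by
    apply Measurable.mul
    · exact hα'm.comp (measurable_fst.sub measurable_snd)
    · exact ((hF.continuous.measurable.comp measurable_fst).sub
        (hF.continuous.measurable.comp measurable_snd)).div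
        ((Complex.measurable_ofReal.comp measurable_fst).sub
          (Complex.measurable_ofReal.comp measurable_snd))
  have hKae : (fun p : ℝ × ℝ => commKernel α F p) =ᵐ[(volume : Measure ℝ).prod volume] K' := by
    filter_upwards [hdiagae, hαae] with p hp hpa
    simp only [commKernel, if_neg hp, hK'def, hpa, mul_div_assoc]
  have hKsm : AEStronglyMeasurable (fun p : ℝ × ℝ => commKernel α F p)
      ((volume : Measure ℝ).prod volume) :=
    hK'm.aestronglyMeasurable.congr hKae.symm
  -- the Hilbert–Schmidt bound on the kernel
  have hbound : ∫⁻ p : ℝ × ℝ, (‖commKernel α F p‖₊ : ℝ≥0∞) ^ (2:ℝ)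
      ∂((volume : Measure ℝ).prod volume) ≤ A * Gn := by
    have h1 : ∫⁻ p : ℝ × ℝ, (‖commKernel α F p‖₊ : ℝ≥0∞) ^ (2:ℝ)
        ∂((volume : Measure ℝ).prod volume)
        = ∫⁻ p : ℝ × ℝ, (‖K' p‖₊ : ℝ≥0∞) ^ (2:ℝ) ∂((volume : Measure ℝ).prod volume) :=
      lintegral_congr_ae (by filter_upwards [hKae] with p hp; rw [hp])
    have h2 : ∫⁻ p : ℝ × ℝ, (‖K' p‖₊ : ℝ≥0∞) ^ (2:ℝ) ∂((volume : Measure ℝ).prod volume)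
        ≤ ∫⁻ p : ℝ × ℝ, (‖α' (p.1 - p.2)‖₊ : ℝ≥0∞) ^ (2:ℝ)
            * ((ENNReal.ofReal |p.1 - p.2|)⁻¹
               * ∫⁻ s in Set.uIoc p.2 p.1, (‖deriv F s‖₊ : ℝ≥0∞) ^ (2:ℝ) ∂volume)
            ∂((volume : Measure ℝ).prod volume) := by
      refine lintegral_mono_ae ?_
      filter_upwards [hdiagae] with p hp
      exact ptw_lemma α' F hF hp
    have hA' : (∫⁻ u, (‖α' u‖₊ : ℝ≥0∞) ^ (2:ℝ) ∂(volume : Measure ℝ)) = A := by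
      refine lintegral_congr_ae ?_
      filter_upwards [hαα'] with u hu
      rw [hu]
    calc ∫⁻ p : ℝ × ℝ, (‖commKernel α F p‖₊ : ℝ≥0∞) ^ (2:ℝ)
        ∂((volume : Measure ℝ).prod volume) = _ := h1
      _ ≤ _ := h2
      _ ≤ (∫⁻ u, (‖α' u‖₊ : ℝ≥0∞) ^ (2:ℝ) ∂(volume : Measure ℝ)) * Gn :=
          double_lemma α' F hα'm hF
      _ = A * Gn := by rw [hA']
  obtain ⟨hint, hmem, hle⟩ := hs_bound (fun p => commKernel α F p) hKsm (A * Gn)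
    (ENNReal.mul_ne_top hAne hGne) hbound v hv
  refine ⟨hint, hmem, hle.trans ?_⟩
  rw [hAeq, hGeq, ENNReal.mul_rpow_of_nonneg _ _ (by norm_num : (0:ℝ) ≤ 1/2)]
end

section
/- For h > 0, let n₂(k) = k/(tanh(k·h)·(1 + i·k)) for k ≠ 0, with n₂(0) = 1/h. Then n₂ is a bounded function on ℝ: there exists C > 0 (depending only on h) such that |n₂(k)| ≤ C for all k ∈ ℝ. -/
/-!
Since `tanh t ≥ t / (1 + t)`, one has `|k| / |tanh (k h)| ≤ 1/h + |k|`; dividing by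
`|1 + i k| = √(1 + k²) ≥ max 1 |k|` gives `|n₂(k)| ≤ 1/h + 1`.
-/

/-- The symbol `n₂(k) = k/(tanh(k·h)·(1 + i·k))` (with `n₂(0) = 1/h`). -/
noncomputable def n2Symbol (h : ℝ) (k : ℝ) : ℂ :=
  if k = 0 then (1 / h : ℝ)
  else (k : ℂ) / ((Real.tanh (k * h) : ℂ) * (1 + Complex.I * (k : ℂ)))

namespace Real

/-- After clearing denominators this is `1 + 2x ≤ exp (2x)`. -/
theorem le_one_add_mul_tanh (x : ℝ) : x ≤ (1 + x) * tanh x := by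
  have hexp : 2 * x + 1 ≤ exp x * exp x := by rw [← exp_add, ← two_mul]; exact add_one_le_exp _
  have hinv : exp x * exp (-x) = 1 := by rw [← exp_add, add_neg_cancel, exp_zero]
  rw [tanh_eq_sinh_div_cosh, sinh_eq, cosh_eq, mul_div_assoc', le_div_iff₀ (by positivity)]
  nlinarith [exp_pos x, exp_pos (-x)]

theorem abs_le_one_add_abs_mul_abs_tanh (x : ℝ) : |x| ≤ (1 + |x|) * |tanh x| := by
  wlog hx : 0 ≤ x
  · simpa [tanh_neg] using this (-x) (by linarith)
  rw [abs_of_nonneg hx]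
  exact (le_one_add_mul_tanh x).trans (by gcongr; exact le_abs_self _)

theorem abs_le_mul_abs_tanh_mul {h : ℝ} (hh : 0 < h) (k : ℝ) :
    |k| ≤ (h⁻¹ + |k|) * |tanh (k * h)| := by
  have := abs_le_one_add_abs_mul_abs_tanh (k * h)
  rw [abs_mul, abs_of_pos hh] at this
  rw [← mul_le_mul_iff_of_pos_right hh]
  calc |k| * h ≤ (1 + |k| * h) * |tanh (k * h)| := this
    _ = (h⁻¹ + |k|) * |tanh (k * h)| * h := by field_simp

theorem add_abs_le_add_one_mul_sqrt {a : ℝ} (ha : 0 ≤ a) (k : ℝ) :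
    a + |k| ≤ (a + 1) * √(1 + k ^ 2) := by
  have h1 : 1 ≤ √(1 + k ^ 2) := one_le_sqrt.2 (by nlinarith [sq_nonneg k])
  have hk : |k| ≤ √(1 + k ^ 2) := abs_le_sqrt (by linarith)
  nlinarith

end Real

open Complex in
theorem Complex.norm_one_add_I_mul_ofReal (k : ℝ) : ‖1 + I * k‖ = √(1 + k ^ 2) := by
  simpa [mul_comm] using norm_add_mul_I 1 k

theorem norm_n2Symbol_of_ne_zero (h : ℝ) {k : ℝ} (hk : k ≠ 0) :
    ‖n2Symbol h k‖ = |k| / (|Real.tanh (k * h)| * √(1 + k ^ 2)) := by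
  rw [n2Symbol, if_neg hk, norm_div, norm_mul, Complex.norm_one_add_I_mul_ofReal]
  simp only [Complex.norm_real, Real.norm_eq_abs]

/-- For `h > 0`, the symbol `n₂` is a bounded function on `ℝ`. -/
theorem n2Symbol_bounded (h : ℝ) (hh : 0 < h) :
    ∃ C : ℝ, 0 < C ∧ ∀ k : ℝ, ‖n2Symbol h k‖ ≤ C := by
  refine ⟨h⁻¹ + 1, by positivity, fun k => ?_⟩
  rcases eq_or_ne k 0 with rfl | hk
  · simp [n2Symbol, abs_of_pos hh]
  have hbound := Real.abs_le_mul_abs_tanh_mul hh k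
  have htanh : 0 < |Real.tanh (k * h)| := by
    refine pos_of_mul_pos_right ((abs_pos.2 hk).trans_le hbound) (by positivity)
  rw [norm_n2Symbol_of_ne_zero h hk, div_le_iff₀ (by positivity)]
  calc |k| ≤ (h⁻¹ + |k|) * |Real.tanh (k * h)| := hbound
    _ ≤ (h⁻¹ + 1) * √(1 + k ^ 2) * |Real.tanh (k * h)| := by
      gcongr; exact Real.add_abs_le_add_one_mul_sqrt (by positivity) k
    _ = (h⁻¹ + 1) * (|Real.tanh (k * h)| * √(1 + k ^ 2)) := by ring
end

section
/- For h > 0, let n₂(k) = k/(tanh(k·h)·(1 + i·k)) for k ≠ 0, with n₂(0) = 1/h. Then n₂ is differentiable on ℝ and its derivative n₂′ belongs to L²(ℝ; ℂ). -/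
open MeasureTheory

/-!
For real `k`, `n₂(k) = cosh(kh) / (h · S(kh) · (1 + ik))`, where `S = dslope sinh 0` is the
entire function `sinh w / w` (with `S 0 = 1`), which has no real zeros. So `n₂` is the
restriction of a function holomorphic near `ℝ`, hence smooth, and `n₂′` is continuous.
For `k ≠ 0`, writing `n₂(k) = coth(kh) · k/(1 + ik)` gives
`n₂′(k) = -h/sinh²(kh) · k/(1 + ik) + coth(kh)/(1 + ik)²`, which is `O(1/|k|)` because
`|sinh x| ≥ |x|` and `coth` decreases on `(0, ∞)`. A continuous function with this decay is
square integrable.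
-/

open Complex Filter Asymptotics

lemma memLp_two_of_isBigO_inv {E : Type*} [NormedAddCommGroup E] {f : ℝ → E}
    (hf : Continuous f) (hdecay : f =O[cocompact ℝ] fun x => x⁻¹) : MemLp f 2 volume := by
  rw [memLp_two_iff_integrable_sq_norm hf.aestronglyMeasurable]
  refine (hf.norm.pow 2).locallyIntegrable.integrable_of_isBigO_cocompact ?_
    (integrable_inv_one_add_sq.integrableAtFilter _)
  calc (fun x => ‖f x‖ ^ 2) =O[cocompact ℝ] fun x => x⁻¹ ^ 2 := hdecay.norm_left.pow 2
    _ =O[cocompact ℝ] fun x => (1 + x ^ 2)⁻¹ := by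
      refine IsBigO.of_bound 2 ?_
      filter_upwards [tendsto_norm_cocompact_atTop.eventually_ge_atTop 1] with x hx
      have hx2 : 1 ≤ x ^ 2 := by simpa [Real.norm_eq_abs, one_le_sq_iff_one_le_abs] using hx
      rw [norm_pow, norm_inv, norm_inv, Real.norm_eq_abs, Real.norm_of_nonneg (by positivity),
        inv_pow, sq_abs, ← div_eq_mul_inv, inv_eq_one_div,
        div_le_div_iff₀ (by positivity) (by positivity)]
      linarith

lemma DifferentiableOn.contDiff_comp_ofReal {E : Type*} [NormedAddCommGroup E] [NormedSpace ℂ E]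
    [CompleteSpace E] {F : ℂ → E} {U : Set ℂ} (hU : IsOpen U) (hF : DifferentiableOn ℂ F U)
    (hR : ∀ x : ℝ, (x : ℂ) ∈ U) {n : WithTop ℕ∞} : ContDiff ℝ n fun x : ℝ => F x :=
  ((hF.contDiffOn hU).restrict_scalars ℝ).comp_contDiff ofRealCLM.contDiff hR

lemma one_le_norm_one_add_I_mul (x : ℝ) : 1 ≤ ‖1 + I * x‖ := by
  simpa using abs_re_le_norm (1 + I * x)

lemma abs_le_norm_one_add_I_mul (x : ℝ) : |x| ≤ ‖1 + I * x‖ := by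
  simpa using abs_im_le_norm (1 + I * x)

lemma one_add_I_mul_ne_zero (x : ℝ) : 1 + I * x ≠ 0 :=
  norm_pos_iff.mp (one_pos.trans_le (one_le_norm_one_add_I_mul x))

lemma dslope_sinh_zero_of_ne {z : ℂ} (hz : z ≠ 0) : dslope sinh 0 z = sinh z / z := by
  rw [dslope_of_ne _ hz, slope_def_field, sinh_zero, sub_zero, sub_zero]

@[fun_prop]
lemma differentiable_dslope_sinh : Differentiable ℂ (dslope sinh 0) := by
  rw [← differentiableOn_univ, differentiableOn_dslope Filter.univ_mem, differentiableOn_univ]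
  exact differentiable_sinh

lemma dslope_sinh_ofReal_ne_zero (x : ℝ) : dslope sinh 0 (x : ℂ) ≠ 0 := by
  rcases eq_or_ne x 0 with rfl | hx
  · simp
  · rw [dslope_sinh_zero_of_ne (ofReal_ne_zero.mpr hx), ← ofReal_sinh, ← ofReal_div]
    exact ofReal_ne_zero.mpr (div_ne_zero (Real.sinh_ne_zero.mpr hx) hx)

lemma n2Symbol_eq_cosh_div {h : ℝ} (hh : h ≠ 0) (x : ℝ) :
    n2Symbol h x = cosh (x * h) / (h * dslope sinh 0 (x * h) * (1 + I * x)) := by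
  rcases eq_or_ne x 0 with rfl | hx
  · simp [n2Symbol]
  · have hh' : (h : ℂ) ≠ 0 := ofReal_ne_zero.mpr hh
    rw [n2Symbol, if_neg hx, dslope_sinh_zero_of_ne (mul_ne_zero (ofReal_ne_zero.mpr hx) hh'),
      ofReal_tanh, tanh_eq_sinh_div_cosh]
    push_cast
    field_simp

lemma contDiff_n2Symbol {h : ℝ} (hh : h ≠ 0) {n : WithTop ℕ∞} : ContDiff ℝ n (n2Symbol h) := by
  set D : ℂ → ℂ := fun z => h * dslope sinh 0 (z * h) * (1 + I * z)
  have hD : Differentiable ℂ D := by fun_prop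
  have hF : DifferentiableOn ℂ (fun z => cosh (z * h) / D z) {z | D z ≠ 0} :=
    DifferentiableOn.div (by fun_prop) hD.differentiableOn fun z hz => hz
  have hR (x : ℝ) : D x ≠ 0 := by
    refine mul_ne_zero (mul_ne_zero (ofReal_ne_zero.mpr hh) ?_) (one_add_I_mul_ne_zero x)
    exact_mod_cast dslope_sinh_ofReal_ne_zero (x * h)
  rw [show n2Symbol h = fun x : ℝ => cosh (x * h) / D x from funext (n2Symbol_eq_cosh_div hh)]
  exact DifferentiableOn.contDiff_comp_ofReal (isOpen_ne_fun hD.continuous continuous_const) hF hR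

lemma Real.hasDerivAt_cosh_div_sinh {x : ℝ} (hx : x ≠ 0) :
    HasDerivAt (fun y => Real.cosh y / Real.sinh y) (-(Real.sinh x ^ 2)⁻¹) x := by
  refine ((Real.hasDerivAt_cosh x).div (Real.hasDerivAt_sinh x)
    (Real.sinh_ne_zero.mpr hx)).congr_deriv ?_
  linear_combination -(Real.sinh x ^ 2)⁻¹ * Real.cosh_sq_sub_sinh_sq x

lemma hasDerivAt_ofReal_div_one_add_I_mul (x : ℝ) :
    HasDerivAt (fun y : ℝ => (y : ℂ) / (1 + I * y)) ((1 + I * x) ^ 2)⁻¹ x := by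
  have hlin : HasDerivAt (fun z : ℂ => 1 + I * z) I x := by
    simpa using ((hasDerivAt_id (x : ℂ)).const_mul I).const_add 1
  refine ((hasDerivAt_id (x : ℂ)).div hlin
    (one_add_I_mul_ne_zero x)).comp_ofReal.congr_deriv ?_
  simp only [id]
  ring

lemma n2Symbol_eq_coth_mul (h : ℝ) {x : ℝ} (hx : x ≠ 0) :
    n2Symbol h x = ((Real.cosh (x * h) / Real.sinh (x * h) : ℝ) : ℂ) * (x / (1 + I * x)) := by
  rw [n2Symbol, if_neg hx, Real.tanh_eq_sinh_div_cosh]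
  simp only [div_eq_mul_inv, mul_inv, ofReal_mul, ofReal_inv, inv_inv]
  ring

lemma hasDerivAt_n2Symbol_of_ne_zero {h : ℝ} (hh : h ≠ 0) {k : ℝ} (hk : k ≠ 0) :
    HasDerivAt (n2Symbol h)
      (-((h / Real.sinh (k * h) ^ 2 : ℝ) : ℂ) * (k / (1 + I * k)) +
        ((Real.cosh (k * h) / Real.sinh (k * h) : ℝ) : ℂ) / (1 + I * k) ^ 2) k := by
  have hcoth : HasDerivAt (fun x => Real.cosh (x * h) / Real.sinh (x * h))
      (-(h / Real.sinh (k * h) ^ 2)) k := by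
    refine ((Real.hasDerivAt_cosh_div_sinh (mul_ne_zero hk hh)).comp k
      ((hasDerivAt_id k).mul_const h)).congr_deriv ?_
    ring
  have hloc : (fun x => ((Real.cosh (x * h) / Real.sinh (x * h) : ℝ) : ℂ) * (x / (1 + I * x)))
      =ᶠ[nhds k] n2Symbol h := by
    filter_upwards [isOpen_ne.mem_nhds hk] with x hx
    exact (n2Symbol_eq_coth_mul h hx).symm
  refine ((hcoth.ofReal_comp.mul (hasDerivAt_ofReal_div_one_add_I_mul k)).congr_of_eventuallyEq
    hloc.symm).congr_deriv ?_
  simp only [div_eq_mul_inv, ofReal_neg]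

lemma Real.sq_le_sinh_sq (x : ℝ) : x ^ 2 ≤ Real.sinh x ^ 2 := by
  rw [← sq_abs, ← sq_abs (Real.sinh x), Real.abs_sinh]
  gcongr
  exact Real.self_le_sinh_iff.mpr (abs_nonneg x)

lemma Real.cosh_div_sinh_le_of_le {x y : ℝ} (hx : 0 < x) (hxy : x ≤ y) :
    Real.cosh y / Real.sinh y ≤ Real.cosh x / Real.sinh x := by
  rw [div_le_div_iff₀ (Real.sinh_pos_iff.mpr (hx.trans_le hxy)) (Real.sinh_pos_iff.mpr hx)]
  have := Real.sinh_nonneg_iff.mpr (sub_nonneg.mpr hxy)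
  linarith [Real.sinh_sub y x]

lemma Real.abs_cosh_div_sinh (x : ℝ) :
    |Real.cosh x / Real.sinh x| = Real.cosh |x| / Real.sinh |x| := by
  rw [abs_div, Real.abs_sinh, abs_of_pos (Real.cosh_pos x), Real.cosh_abs]

lemma div_sinh_mul_sq_le {h k : ℝ} (hh : 0 < h) (hk : 1 ≤ |k|) :
    h / Real.sinh (k * h) ^ 2 ≤ (h * |k|)⁻¹ := by
  have hk0 : 0 < |k| := one_pos.trans_le hk
  calc h / Real.sinh (k * h) ^ 2 ≤ h / (k * h) ^ 2 :=
        div_le_div_of_nonneg_left hh.le (by positivity [abs_pos.mp hk0]) (Real.sq_le_sinh_sq _)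
    _ = (h * |k| * |k|)⁻¹ := by rw [mul_assoc, ← sq, sq_abs]; field_simp
    _ ≤ (h * |k|)⁻¹ := by
        gcongr
        exact le_mul_of_one_le_right (by positivity) hk

lemma norm_deriv_n2Symbol_le {h : ℝ} (hh : 0 < h) {k : ℝ} (hk : 1 ≤ |k|) :
    ‖deriv (n2Symbol h) k‖ ≤ (h⁻¹ + Real.cosh h / Real.sinh h) * |k|⁻¹ := by
  have hk0 : k ≠ 0 := abs_pos.mp (one_pos.trans_le hk)
  have hterm1 : ‖-((h / Real.sinh (k * h) ^ 2 : ℝ) : ℂ) * (k / (1 + I * k))‖ ≤ h⁻¹ * |k|⁻¹ := by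
    have hq : ‖(k : ℂ) / (1 + I * k)‖ ≤ 1 := by
      rw [norm_div, norm_real, Real.norm_eq_abs,
        div_le_one (one_pos.trans_le (one_le_norm_one_add_I_mul k))]
      exact abs_le_norm_one_add_I_mul k
    rw [norm_mul, norm_neg, norm_real, Real.norm_of_nonneg (by positivity), ← mul_inv]
    calc h / Real.sinh (k * h) ^ 2 * ‖(k : ℂ) / (1 + I * k)‖ ≤ h / Real.sinh (k * h) ^ 2 * 1 := by
          gcongr
      _ ≤ (h * |k|)⁻¹ := by rw [mul_one]; exact div_sinh_mul_sq_le hh hk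
  have hterm2 : ‖((Real.cosh (k * h) / Real.sinh (k * h) : ℝ) : ℂ) / (1 + I * k) ^ 2‖ ≤
      Real.cosh h / Real.sinh h * |k|⁻¹ := by
    rw [norm_div, norm_real, Real.norm_eq_abs, div_eq_mul_inv]
    gcongr
    · rw [Real.abs_cosh_div_sinh, abs_mul, abs_of_pos hh]
      exact Real.cosh_div_sinh_le_of_le hh (le_mul_of_one_le_left hh.le hk)
    · rw [norm_pow, sq]
      nlinarith [one_le_norm_one_add_I_mul k, abs_le_norm_one_add_I_mul k, abs_nonneg k]
  rw [(hasDerivAt_n2Symbol_of_ne_zero hh.ne' hk0).deriv, add_mul]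
  exact (norm_add_le _ _).trans (add_le_add hterm1 hterm2)

/-- For `h > 0`, the symbol `n₂` is differentiable on `ℝ` and its derivative is
square-integrable. -/
theorem n2Symbol_deriv_memL2 (h : ℝ) (hh : 0 < h) :
    Differentiable ℝ (n2Symbol h) ∧
      MemLp (deriv (n2Symbol h)) 2 (volume : Measure ℝ) := by
  have hsmooth : ContDiff ℝ 1 (n2Symbol h) := contDiff_n2Symbol hh.ne'
  refine ⟨hsmooth.differentiable one_ne_zero,
    memLp_two_of_isBigO_inv (hsmooth.continuous_deriv le_rfl) ?_⟩
  refine IsBigO.of_bound (h⁻¹ + Real.cosh h / Real.sinh h) ?_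
  filter_upwards [tendsto_norm_cocompact_atTop.eventually_ge_atTop 1] with k hk
  rw [norm_inv, Real.norm_eq_abs]
  exact norm_deriv_n2Symbol_le hh hk
end
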